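/- arXiv:1302.2349 — 5 statements merged into one kernel-verified Lean document; each statement's English description precedes it below -/
import Mathlib

section
/- Let X ⊂ E_x and Y ⊂ E_y be nonempty closed bounded convex subsets of Euclidean spaces, A: E_y → E_x a linear map, a ∈ E_x, and ψ a Lipschitz continuous convex function on Y with a subgradient selection ψ'(y) ∈ ∂ψ(y). Define f_*(x) = min_{y∈Y}[⟨x, Ay + a⟩ + ψ(y)], f(y) = max_{x∈X}[⟨x, Ay + a⟩ + ψ(y)], Opt(P) = max_{x∈X} f_*(x), Opt(D) = min_{y∈Y} f(y), so that Opt(P) = Opt(D). Given points y_1, ..., y_t ∈ Y, points x_τ ∈ Argmax_{x∈X}⟨x, Ay_τ + a⟩, vectors f'(y_τ) = A^T x_τ + ψ'(y_τ), and weights λ_1, ..., λ_t ≥ 0 with Σ_{τ=1}^t λ_τ = 1, set x̂ = Σ_{τ=1}^t λ_τ x_τ and ŷ = Σ_{τ=1}^t λ_τ y_τ. Then x̂ ∈ X, ŷ ∈ Y and [f(ŷ) − Opt(D)] + [Opt(P) − f_*(x̂)] = f(ŷ) − f_*(x̂) ≤ max_{y∈Y} Σ_{τ=1}^t λ_τ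 ⟨f'(y_τ), y_τ − y⟩. -/
/-!
By Sion's minimax theorem the function `φ(y, x) = ⟪x, A y + a⟫ + ψ y`, convex and continuous in
`y ∈ Y`, affine in `x ∈ X`, has a saddle point on `Y × X`, so `Opt(P) = Opt(D)`. For the bound,
convexity of `φ(·, u)` and maximality of each `x_τ` give `f ŷ ≤ Σ λ_τ φ(y_τ, x_τ)`, while concavity
of `φ(z, ·)` and the fact that `f'(y_τ)` is a subgradient of `φ(·, x_τ)` at `y_τ` give
`f_* x̂ ≥ Σ λ_τ φ(y_τ, x_τ) - max_{z ∈ Y} Σ λ_τ ⟪f'(y_τ), y_τ - z⟫`.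
-/

open RealInnerProductSpace

section SaddlePointValue

variable {E F : Type*} {S : Set E} {T : Set F} {φ : E → F → ℝ} {y₀ : E} {x₀ : F}

theorem IsSaddlePointOn.sInf_sSup_eq (h : IsSaddlePointOn S T φ y₀ x₀) (hy₀ : y₀ ∈ S)
    (hx₀ : x₀ ∈ T) (hbdd : ∀ y ∈ S, BddAbove (φ y '' T)) :
    sInf ((fun y => sSup (φ y '' T)) '' S) = φ y₀ x₀ := by
  have hy₀max : sSup (φ y₀ '' T) = φ y₀ x₀ :=
    IsGreatest.csSup_eq ⟨⟨x₀, hx₀, rfl⟩, by rintro _ ⟨x, hx, rfl⟩; exact h y₀ hy₀ x hx⟩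
  refine IsLeast.csInf_eq ⟨⟨y₀, hy₀, hy₀max⟩, ?_⟩
  rintro _ ⟨y, hy, rfl⟩
  exact (h y hy x₀ hx₀).trans (le_csSup (hbdd y hy) ⟨x₀, hx₀, rfl⟩)

theorem IsSaddlePointOn.sSup_sInf_eq (h : IsSaddlePointOn S T φ y₀ x₀) (hy₀ : y₀ ∈ S)
    (hx₀ : x₀ ∈ T) (hbdd : ∀ x ∈ T, BddBelow ((φ · x) '' S)) :
    sSup ((fun x => sInf ((φ · x) '' S)) '' T) = φ y₀ x₀ := by
  have hx₀min : sInf ((φ · x₀) '' S) = φ y₀ x₀ :=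
    IsLeast.csInf_eq ⟨⟨y₀, hy₀, rfl⟩, by rintro _ ⟨y, hy, rfl⟩; exact h y hy x₀ hx₀⟩
  refine IsGreatest.csSup_eq ⟨⟨x₀, hx₀, hx₀min⟩, ?_⟩
  rintro _ ⟨x, hx, rfl⟩
  exact (csInf_le (hbdd x hx) ⟨y₀, hy₀, rfl⟩).trans (h y₀ hy₀ x hx)

end SaddlePointValue

section AccuracyCertificate

variable {E F ι : Type*} [Fintype ι] {Y : Set E} {X : Set F} {φ : E → F → ℝ}
  {y : ι → E} {x : ι → F} {lam : ι → ℝ}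

theorem sSup_image_le_sum_of_convexOn [AddCommGroup E] [Module ℝ E]
    (hconv : ∀ u ∈ X, ConvexOn ℝ Y (φ · u))
    (hX : X.Nonempty) (hy : ∀ τ, y τ ∈ Y) (hmax : ∀ τ, ∀ u ∈ X, φ (y τ) u ≤ φ (y τ) (x τ))
    (hlam : ∀ τ, 0 ≤ lam τ) (hsum : ∑ τ, lam τ = 1) :
    sSup (φ (∑ τ, lam τ • y τ) '' X) ≤ ∑ τ, lam τ * φ (y τ) (x τ) := by
  refine csSup_le (hX.image _) ?_
  rintro _ ⟨u, hu, rfl⟩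
  calc φ (∑ τ, lam τ • y τ) u
      ≤ ∑ τ, lam τ * φ (y τ) u :=
        (hconv u hu).map_sum_le (fun τ _ => hlam τ) hsum (fun τ _ => hy τ)
    _ ≤ ∑ τ, lam τ * φ (y τ) (x τ) :=
        Finset.sum_le_sum fun τ _ => mul_le_mul_of_nonneg_left (hmax τ u hu) (hlam τ)

theorem sum_sub_sSup_le_sInf_of_concaveOn [NormedAddCommGroup E] [InnerProductSpace ℝ E]
    [AddCommGroup F] [Module ℝ F] (hconc : ∀ z ∈ Y, ConcaveOn ℝ X (φ z))
    (hY : Y.Nonempty) (hYc : IsCompact Y) (hx : ∀ τ, x τ ∈ X) {g : ι → E}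
    (hg : ∀ τ, ∀ z ∈ Y, φ (y τ) (x τ) + ⟪g τ, z - y τ⟫ ≤ φ z (x τ))
    (hlam : ∀ τ, 0 ≤ lam τ) (hsum : ∑ τ, lam τ = 1) :
    ∑ τ, lam τ * φ (y τ) (x τ) - sSup ((fun z => ∑ τ, lam τ * ⟪g τ, y τ - z⟫) '' Y) ≤
      sInf ((φ · (∑ τ, lam τ • x τ)) '' Y) := by
  have hres : BddAbove ((fun z => ∑ τ, lam τ * ⟪g τ, y τ - z⟫) '' Y) :=
    hYc.bddAbove_image (by fun_prop)
  refine le_csInf (hY.image _) ?_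
  rintro _ ⟨z, hz, rfl⟩
  have hgap : ∑ τ, lam τ * φ (y τ) (x τ) - ∑ τ, lam τ * φ z (x τ) ≤
      ∑ τ, lam τ * ⟪g τ, y τ - z⟫ := by
    rw [← Finset.sum_sub_distrib]
    refine Finset.sum_le_sum fun τ _ => ?_
    rw [← mul_sub]
    refine mul_le_mul_of_nonneg_left ?_ (hlam τ)
    have hτ := hg τ z hz
    rw [← neg_sub, inner_neg_right] at hτ
    linarith
  have hjensen : ∑ τ, lam τ * φ z (x τ) ≤ φ z (∑ τ, lam τ • x τ) :=
    (hconc z hz).le_map_sum (fun τ _ => hlam τ) hsum (fun τ _ => hx τ)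
  linarith [le_csSup hres ⟨z, hz, rfl⟩]

end AccuracyCertificate

section FenchelCoupling

variable {Ex Ey : Type*} [NormedAddCommGroup Ex] [InnerProductSpace ℝ Ex]
  [NormedAddCommGroup Ey] [InnerProductSpace ℝ Ey]
  (A : Ey →ₗ[ℝ] Ex) (a : Ex) (ψ : Ey → ℝ) {X : Set Ex} {Y : Set Ey}

/-- The minimized variable `y` comes first, as in `IsSaddlePointOn`. -/
def fenchelCoupling (y : Ey) (x : Ex) : ℝ := ⟪x, A y + a⟫ + ψ y

variable {A a ψ}

theorem convexOn_fenchelCoupling_left (hψ : ConvexOn ℝ Y ψ) (u : Ex) :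
    ConvexOn ℝ Y (fenchelCoupling A a ψ · u) := by
  refine ((((innerₛₗ ℝ u).comp A).convexOn hψ.1).add_const ⟪u, a⟫).add hψ |>.congr ?_
  intro y _
  simp [fenchelCoupling, inner_add_right]

theorem concaveOn_fenchelCoupling_right (hX : Convex ℝ X) (y : Ey) :
    ConcaveOn ℝ X (fenchelCoupling A a ψ y) := by
  refine ((innerₛₗ ℝ (A y + a)).concaveOn hX).add_const (ψ y) |>.congr ?_
  intro u _
  simp only [Pi.add_apply, innerₛₗ_apply_apply, fenchelCoupling, real_inner_comm]

theorem fenchelCoupling_add_inner_le [FiniteDimensional ℝ Ex] [FiniteDimensional ℝ Ey]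
    {y z g : Ey} (hg : ψ y + ⟪g, z - y⟫ ≤ ψ z) (u : Ex) :
    fenchelCoupling A a ψ y u + ⟪LinearMap.adjoint A u + g, z - y⟫ ≤
      fenchelCoupling A a ψ z u := by
  have hadj : ⟪LinearMap.adjoint A u, z - y⟫ = ⟪u, A z + a⟫ - ⟪u, A y + a⟫ := by
    rw [LinearMap.adjoint_inner_left, map_sub, inner_sub_right, inner_add_right,
      inner_add_right]
    ring
  simp only [fenchelCoupling, inner_add_left, hadj]
  linarith

theorem continuousOn_fenchelCoupling_left [FiniteDimensional ℝ Ey] (hψ : ContinuousOn ψ Y)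
    (u : Ex) : ContinuousOn (fenchelCoupling A a ψ · u) Y := by
  have hA : Continuous A := A.continuous_of_finiteDimensional
  exact (continuous_const.inner (hA.add continuous_const)).continuousOn.add hψ

theorem continuous_fenchelCoupling_right (y : Ey) : Continuous (fenchelCoupling A a ψ y) :=
  (continuous_id.inner continuous_const).add continuous_const

theorem sSup_sInf_fenchelCoupling_eq_sInf_sSup [FiniteDimensional ℝ Ey]
    (hXne : X.Nonempty) (hXcv : Convex ℝ X) (hXcp : IsCompact X)
    (hYne : Y.Nonempty) (hYcv : Convex ℝ Y) (hYcp : IsCompact Y)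
    (hψcv : ConvexOn ℝ Y ψ) (hψc : ContinuousOn ψ Y) :
    sSup ((fun x => sInf ((fenchelCoupling A a ψ · x) '' Y)) '' X) =
      sInf ((fun y => sSup (fenchelCoupling A a ψ y '' X)) '' Y) := by
  obtain ⟨y₀, hy₀, x₀, hx₀, hsaddle⟩ := Sion.exists_isSaddlePointOn hYne hYcv hYcp
    (fun u _ => (continuousOn_fenchelCoupling_left hψc u).lowerSemicontinuousOn)
    (fun u _ => (convexOn_fenchelCoupling_left hψcv u).quasiconvexOn) hXcv hXne hXcp
    (fun y _ => (continuous_fenchelCoupling_right y).continuousOn.upperSemicontinuousOn)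
    (fun y _ => (concaveOn_fenchelCoupling_right hXcv y).quasiconcaveOn)
  rw [hsaddle.sSup_sInf_eq hy₀ hx₀
      fun u _ => hYcp.bddBelow_image (continuousOn_fenchelCoupling_left hψc u),
    hsaddle.sInf_sSup_eq hy₀ hx₀
      fun y _ => hXcp.bddAbove_image (continuous_fenchelCoupling_right y).continuousOn]

end FenchelCoupling

/-- Proposition 2 (duality and accuracy certificates for the Fenchel-type representation
`f_*(x) = min_{y∈Y} [⟨x, Ay + a⟩ + ψ(y)]`):
given an execution protocol `(y_τ, f'(y_τ))` with `f'(y_τ) = Aᵀ x_τ + ψ'(y_τ)`,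
`x_τ ∈ Argmax_{x∈X} ⟨x, A y_τ + a⟩`, and an accuracy certificate `λ`, the aggregated points
`x̂ = Σ λ_τ x_τ`, `ŷ = Σ λ_τ y_τ` are feasible and
`[f(ŷ) − Opt(D)] + [Opt(P) − f_*(x̂)] = f(ŷ) − f_*(x̂) ≤ resolution`. -/
theorem stmt1
    {Ex Ey : Type*} [NormedAddCommGroup Ex] [InnerProductSpace ℝ Ex] [FiniteDimensional ℝ Ex]
    [NormedAddCommGroup Ey] [InnerProductSpace ℝ Ey] [FiniteDimensional ℝ Ey]
    (X : Set Ex) (hXne : X.Nonempty) (hXcl : IsClosed X)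
    (hXbd : Bornology.IsBounded X) (hXcv : Convex ℝ X)
    (Y : Set Ey) (hYne : Y.Nonempty) (hYcl : IsClosed Y)
    (hYbd : Bornology.IsBounded Y) (hYcv : Convex ℝ Y)
    (A : Ey →ₗ[ℝ] Ex) (a : Ex)
    (ψ : Ey → ℝ) (K : NNReal) (hψlip : LipschitzOnWith K ψ Y) (hψcv : ConvexOn ℝ Y ψ)
    (ψ' : Ey → Ey) (hψ' : ∀ y ∈ Y, ∀ z ∈ Y, ψ y + ⟪ψ' y, z - y⟫ ≤ ψ z)
    (fstar : Ex → ℝ)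
    (hfstar : ∀ x, fstar x = sInf ((fun y => ⟪x, A y + a⟫ + ψ y) '' Y))
    (f : Ey → ℝ)
    (hf : ∀ y, f y = sSup ((fun x => ⟪x, A y + a⟫ + ψ y) '' X))
    (OptP OptD : ℝ) (hOptP : OptP = sSup (fstar '' X)) (hOptD : OptD = sInf (f '' Y))
    (t : ℕ) (y : Fin t → Ey) (hy : ∀ τ, y τ ∈ Y)
    (x : Fin t → Ex)
    (hx : ∀ τ, x τ ∈ X ∧ ∀ u ∈ X, ⟪u, A (y τ) + a⟫ ≤ ⟪x τ, A (y τ) + a⟫)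
    (lam : Fin t → ℝ) (hlam : ∀ τ, 0 ≤ lam τ) (hsum : ∑ τ, lam τ = 1)
    (xhat : Ex) (hxhat : xhat = ∑ τ, lam τ • x τ)
    (yhat : Ey) (hyhat : yhat = ∑ τ, lam τ • y τ) :
    xhat ∈ X ∧ yhat ∈ Y ∧
      (f yhat - OptD) + (OptP - fstar xhat) = f yhat - fstar xhat ∧
      f yhat - fstar xhat ≤
        sSup ((fun z =>
          ∑ τ, lam τ * ⟪LinearMap.adjoint A (x τ) + ψ' (y τ), y τ - z⟫) '' Y) := by
  have hXcp : IsCompact X := Metric.isCompact_of_isClosed_isBounded hXcl hXbd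
  have hYcp : IsCompact Y := Metric.isCompact_of_isClosed_isBounded hYcl hYbd
  have hf' : f = fun y => sSup (fenchelCoupling A a ψ y '' X) := funext hf
  have hfstar' : fstar = fun x => sInf ((fenchelCoupling A a ψ · x) '' Y) := funext hfstar
  have hduality : OptP = OptD := by
    rw [hOptP, hOptD, hf', hfstar']
    exact sSup_sInf_fenchelCoupling_eq_sInf_sSup hXne hXcv hXcp hYne hYcv hYcp hψcv
      hψlip.continuousOn
  have hupper : f yhat ≤ ∑ τ, lam τ * fenchelCoupling A a ψ (y τ) (x τ) := by
    rw [hf', hyhat]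
    exact sSup_image_le_sum_of_convexOn (fun u _ => convexOn_fenchelCoupling_left hψcv u) hXne
      hy (fun τ u hu => add_le_add_left ((hx τ).2 u hu) _) hlam hsum
  have hlower : ∑ τ, lam τ * fenchelCoupling A a ψ (y τ) (x τ) -
      sSup ((fun z => ∑ τ, lam τ * ⟪LinearMap.adjoint A (x τ) + ψ' (y τ), y τ - z⟫) '' Y) ≤
        fstar xhat := by
    rw [hfstar', hxhat]
    exact sum_sub_sSup_le_sInf_of_concaveOn (fun z _ => concaveOn_fenchelCoupling_right hXcv z)
      hYne hYcp (fun τ => (hx τ).1)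
      (fun τ z hz => fenchelCoupling_add_inner_le (hψ' (y τ) (hy τ) z hz) (x τ)) hlam hsum
  refine ⟨hxhat ▸ hXcv.sum_mem (fun τ _ => hlam τ) hsum (fun τ _ => (hx τ).1),
    hyhat ▸ hYcv.sum_mem (fun τ _ => hlam τ) hsum (fun τ _ => hy τ), by linarith, ?_⟩
  linarith
end

section
/- Let X ⊂ E_x and Y ⊂ E_y be nonempty closed bounded convex subsets of Euclidean spaces, and let F(x,y): X × Y → ℝ be Lipschitz continuous, concave in x ∈ X for each y ∈ Y and convex in y ∈ Y for each x ∈ X. Set f(y) = max_{x∈X} F(x,y) and f_*(x) = min_{y∈Y} F(x,y). Let F'_y(x,y) be a selection with F'_y(x,y) ∈ ∂_y F(x,y) for all x ∈ X, y ∈ Y, and for each y let x(y) ∈ Argmax_{x∈X} F(x,y). Given y_1, ..., y_t ∈ Y and weights λ_1, ..., λ_t ≥ 0 with Σ_τ λ_τ = 1, set x̂ = Σ_τ λ_τ x(y_τ) and ŷ = Σ_τ λ_τ y_τ. Then x̂ ∈ X, ŷ ∈ Y and f(ŷ) − f_*(x̂) ≤ max_{y∈Y} Σ_{τ=1}^t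 λ_τ ⟨F'_y(x(y_τ), y_τ), y_τ − y⟩. -/
/-!
Jensen's inequality in `y`, maximality of each `x(y_τ)`, the subgradient inequality at `y_τ`
and Jensen's inequality in `x` chain into
`F(x, ŷ) ≤ F(x̂, z) + Σ_τ λ_τ ⟨F'_y(x(y_τ), y_τ), y_τ − z⟫` for all `x ∈ X`, `z ∈ Y`.
Taking the supremum over `x` and the infimum over `z` bounds the duality gap `f(ŷ) − f_*(x̂)`
by the resolution of the certificate.
-/

open RealInnerProductSpace

theorem bddAbove_image_sum_mul_inner_sub {E ι : Type*} [NormedAddCommGroup E]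
    [InnerProductSpace ℝ E] [Fintype ι] {Y : Set E} (hY : Bornology.IsBounded Y)
    (lam : ι → ℝ) (g p : ι → E) :
    BddAbove ((fun z => ∑ i, lam i * ⟪g i, p i - z⟫) '' Y) := by
  obtain ⟨R, hR⟩ := hY.exists_norm_le
  refine ⟨∑ i, |lam i| * (‖g i‖ * (‖p i‖ + R)), ?_⟩
  rintro _ ⟨z, hz, rfl⟩
  refine Finset.sum_le_sum fun i _ => ?_
  calc lam i * ⟪g i, p i - z⟫ ≤ |lam i * ⟪g i, p i - z⟫| := le_abs_self _
    _ = |lam i| * |⟪g i, p i - z⟫| := abs_mul _ _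
    _ ≤ |lam i| * (‖g i‖ * (‖p i‖ + R)) := by
      gcongr
      calc |⟪g i, p i - z⟫| ≤ ‖g i‖ * ‖p i - z‖ := abs_real_inner_le_norm _ _
        _ ≤ ‖g i‖ * (‖p i‖ + R) := by
          gcongr
          exact (norm_sub_le _ _).trans (by gcongr; exact hR z hz)

theorem sSup_image_sub_sInf_image_le {α β : Type*} {X : Set α} {Y : Set β}
    (hX : X.Nonempty) (hY : Y.Nonempty) {F : α → β → ℝ} {a : α} {b : β} {S : ℝ}
    (h : ∀ x ∈ X, ∀ z ∈ Y, F x b ≤ F a z + S) :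
    sSup ((fun x => F x b) '' X) - sInf ((fun z => F a z) '' Y) ≤ S := by
  have hsup : ∀ z ∈ Y, sSup ((fun x => F x b) '' X) ≤ F a z + S := fun z hz =>
    csSup_le (hX.image _) (by rintro _ ⟨x, hx, rfl⟩; exact h x hx z hz)
  have hinf : sSup ((fun x => F x b) '' X) - S ≤ sInf ((fun z => F a z) '' Y) :=
    le_csInf (hY.image _) (by rintro _ ⟨z, hz, rfl⟩; linarith [hsup z hz])
  linarith

section SaddlePoint

variable {Ex Ey ι : Type*} [NormedAddCommGroup Ex] [InnerProductSpace ℝ Ex]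
  [NormedAddCommGroup Ey] [InnerProductSpace ℝ Ey] [Fintype ι]
  {X : Set Ex} {Y : Set Ey} {F : Ex → Ey → ℝ}

theorem le_add_sum_mul_inner_of_saddle
    (hFconc : ∀ y ∈ Y, ConcaveOn ℝ X (fun x => F x y))
    (hFconv : ∀ x ∈ X, ConvexOn ℝ Y (fun y => F x y))
    {xs : ι → Ex} {ys : ι → Ey} {g : ι → Ey}
    (hxs : ∀ i, xs i ∈ X) (hys : ∀ i, ys i ∈ Y)
    (hmax : ∀ i, ∀ u ∈ X, F u (ys i) ≤ F (xs i) (ys i))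
    (hsub : ∀ i, ∀ z ∈ Y, F (xs i) (ys i) + ⟪g i, z - ys i⟫ ≤ F (xs i) z)
    {lam : ι → ℝ} (hlam : ∀ i, 0 ≤ lam i) (hsum : ∑ i, lam i = 1)
    {u : Ex} (hu : u ∈ X) {z : Ey} (hz : z ∈ Y) :
    F u (∑ i, lam i • ys i) ≤
      F (∑ i, lam i • xs i) z + ∑ i, lam i * ⟪g i, ys i - z⟫ := by
  have hsub' : ∀ i, F (xs i) (ys i) ≤ F (xs i) z + ⟪g i, ys i - z⟫ := fun i => by
    have := hsub i z hz
    rw [← neg_sub z, inner_neg_right]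
    linarith
  calc F u (∑ i, lam i • ys i) ≤ ∑ i, lam i * F u (ys i) :=
        (hFconv u hu).map_sum_le (fun i _ => hlam i) hsum (fun i _ => hys i)
    _ ≤ ∑ i, lam i * (F (xs i) z + ⟪g i, ys i - z⟫) := Finset.sum_le_sum fun i _ =>
        mul_le_mul_of_nonneg_left ((hmax i u hu).trans (hsub' i)) (hlam i)
    _ = ∑ i, lam i * F (xs i) z + ∑ i, lam i * ⟪g i, ys i - z⟫ := by
        simp only [mul_add, Finset.sum_add_distrib]
    _ ≤ F (∑ i, lam i • xs i) z + ∑ i, lam i * ⟪g i, ys i - z⟫ := by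
        gcongr
        exact (hFconc z hz).le_map_sum (fun i _ => hlam i) hsum (fun i _ => hxs i)

end SaddlePoint

theorem stmt2_general
    {Ex Ey : Type*} [NormedAddCommGroup Ex] [InnerProductSpace ℝ Ex]
    [NormedAddCommGroup Ey] [InnerProductSpace ℝ Ey]
    (X : Set Ex) (hXcv : Convex ℝ X)
    (Y : Set Ey)
    (hYbd : Bornology.IsBounded Y) (hYcv : Convex ℝ Y)
    (F : Ex → Ey → ℝ)
    (hFconc : ∀ y ∈ Y, ConcaveOn ℝ X (fun x => F x y))
    (hFconv : ∀ x ∈ X, ConvexOn ℝ Y (fun y => F x y))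
    (Fy' : Ex → Ey → Ey)
    (hFy' : ∀ x ∈ X, ∀ y ∈ Y, ∀ z ∈ Y, F x y + ⟪Fy' x y, z - y⟫ ≤ F x z)
    (xsel : Ey → Ex)
    (hxsel : ∀ y ∈ Y, xsel y ∈ X ∧ ∀ u ∈ X, F u y ≤ F (xsel y) y)
    (f : Ey → ℝ) (hf : ∀ y, f y = sSup ((fun x => F x y) '' X))
    (fstar : Ex → ℝ) (hfstar : ∀ x, fstar x = sInf ((fun y => F x y) '' Y))
    (t : ℕ) (y : Fin t → Ey) (hy : ∀ τ, y τ ∈ Y)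
    (lam : Fin t → ℝ) (hlam : ∀ τ, 0 ≤ lam τ) (hsum : ∑ τ, lam τ = 1)
    (xhat : Ex) (hxhat : xhat = ∑ τ, lam τ • xsel (y τ))
    (yhat : Ey) (hyhat : yhat = ∑ τ, lam τ • y τ) :
    xhat ∈ X ∧ yhat ∈ Y ∧
      f yhat - fstar xhat ≤
        sSup ((fun z => ∑ τ, lam τ * ⟪Fy' (xsel (y τ)) (y τ), y τ - z⟫) '' Y) := by
  have hxselX : ∀ τ, xsel (y τ) ∈ X := fun τ => (hxsel (y τ) (hy τ)).1
  have hxhatX : xhat ∈ X :=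
    hxhat ▸ hXcv.sum_mem (fun τ _ => hlam τ) hsum fun τ _ => hxselX τ
  have hyhatY : yhat ∈ Y := hyhat ▸ hYcv.sum_mem (fun τ _ => hlam τ) hsum fun τ _ => hy τ
  refine ⟨hxhatX, hyhatY, ?_⟩
  rw [hf, hfstar]
  refine sSup_image_sub_sInf_image_le ⟨xhat, hxhatX⟩ ⟨yhat, hyhatY⟩ fun u hu z hz => ?_
  calc F u yhat ≤ F xhat z + ∑ τ, lam τ * ⟪Fy' (xsel (y τ)) (y τ), y τ - z⟫ := by
        rw [hxhat, hyhat]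
        exact le_add_sum_mul_inner_of_saddle hFconc hFconv hxselX hy
          (fun τ => (hxsel (y τ) (hy τ)).2) (fun τ => hFy' _ (hxselX τ) _ (hy τ))
          hlam hsum hu hz
    _ ≤ _ := add_le_add_right (le_csSup (bddAbove_image_sum_mul_inner_sub hYbd _ _ _)
        (Set.mem_image_of_mem _ hz)) _

/-- Remark 1, first part: for a Lipschitz continuous saddle function `F(x,y)`
(concave in `x ∈ X`, convex in `y ∈ Y`), a subgradient selection `F'_y(x,y) ∈ ∂_y F(x,y)`,
exact maximizers `x(y) ∈ Argmax_{x∈X} F(x,y)`, and an accuracy certificate `λ`, the points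
`x̂ = Σ λ_τ x(y_τ)`, `ŷ = Σ λ_τ y_τ` are feasible and `f(ŷ) − f_*(x̂) ≤ resolution`. -/
theorem stmt2
    {Ex Ey : Type*} [NormedAddCommGroup Ex] [InnerProductSpace ℝ Ex] [FiniteDimensional ℝ Ex]
    [NormedAddCommGroup Ey] [InnerProductSpace ℝ Ey] [FiniteDimensional ℝ Ey]
    (X : Set Ex) (hXne : X.Nonempty) (hXcl : IsClosed X)
    (hXbd : Bornology.IsBounded X) (hXcv : Convex ℝ X)
    (Y : Set Ey) (hYne : Y.Nonempty) (hYcl : IsClosed Y)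
    (hYbd : Bornology.IsBounded Y) (hYcv : Convex ℝ Y)
    (F : Ex → Ey → ℝ)
    (K : NNReal) (hFlip : LipschitzOnWith K (fun p : Ex × Ey => F p.1 p.2) (X ×ˢ Y))
    (hFconc : ∀ y ∈ Y, ConcaveOn ℝ X (fun x => F x y))
    (hFconv : ∀ x ∈ X, ConvexOn ℝ Y (fun y => F x y))
    (Fy' : Ex → Ey → Ey)
    (hFy' : ∀ x ∈ X, ∀ y ∈ Y, ∀ z ∈ Y, F x y + ⟪Fy' x y, z - y⟫ ≤ F x z)
    (xsel : Ey → Ex)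
    (hxsel : ∀ y ∈ Y, xsel y ∈ X ∧ ∀ u ∈ X, F u y ≤ F (xsel y) y)
    (f : Ey → ℝ) (hf : ∀ y, f y = sSup ((fun x => F x y) '' X))
    (fstar : Ex → ℝ) (hfstar : ∀ x, fstar x = sInf ((fun y => F x y) '' Y))
    (t : ℕ) (y : Fin t → Ey) (hy : ∀ τ, y τ ∈ Y)
    (lam : Fin t → ℝ) (hlam : ∀ τ, 0 ≤ lam τ) (hsum : ∑ τ, lam τ = 1)
    (xhat : Ex) (hxhat : xhat = ∑ τ, lam τ • xsel (y τ))
    (yhat : Ey) (hyhat : yhat = ∑ τ, lam τ • y τ) :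
    xhat ∈ X ∧ yhat ∈ Y ∧
      f yhat - fstar xhat ≤
        sSup ((fun z => ∑ τ, lam τ * ⟪Fy' (xsel (y τ)) (y τ), y τ - z⟫) '' Y) :=
  stmt2_general X hXcv Y hYbd hYcv F hFconc hFconv Fy' hFy' xsel hxsel f hf fstar hfstar t y hy lam
    hlam hsum xhat hxhat yhat hyhat
end

section
/- Let X ⊂ E_x and Y ⊂ E_y be nonempty closed bounded convex subsets of Euclidean spaces, and let F(x,y): X × Y → ℝ be Lipschitz continuous, concave in x ∈ X for each y ∈ Y and convex in y ∈ Y for each x ∈ X. Set f(y) = max_{x∈X} F(x,y) and f_*(x) = min_{y∈Y} F(x,y). Let δ ≥ 0 and let x_δ(y) ∈ X satisfy F(x_δ(y), y) ≥ max_{x∈X} F(x,y) − δ for all y ∈ Y, and let F'_y(x,y) ∈ ∂_y F(x,y) be a subgradient selection. Given y_1, ..., y_t ∈ Y and weights λ_1, ..., λ_t ≥ 0 with Σ_τ λ_τ = 1, set x̂ = Σ_τ λ_τ x_δ(y_τ) and ŷ = Σ_τ λ_τ y_τ. Then x̂ ∈ X, ŷ ∈ Y and f(ŷ) − f_*(x̂)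 ≤ max_{y∈Y} Σ_{τ=1}^t λ_τ ⟨F'_y(x_δ(y_τ), y_τ), y_τ − y⟩ + δ. -/
/-!
Write `x_τ = x_δ(y_τ)`, `g_τ = F'_y(x_τ, y_τ)` and `A = ∑ λ_τ F(x_τ, y_τ)`. For `x ∈ X`,
convexity in `y` and `δ`-optimality of `x_τ` give `F(x, ŷ) ≤ ∑ λ_τ F(x, y_τ) ≤ A + δ`,
so `f(ŷ) ≤ A + δ`. For `z ∈ Y`, concavity in `x` and the subgradient inequality give
`F(x̂, z) ≥ ∑ λ_τ F(x_τ, z) ≥ A - ∑ λ_τ ⟪g_τ, y_τ - z⟫`,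
so `f_*(x̂) ≥ A - max_z ∑ λ_τ ⟪g_τ, y_τ - z⟫`.
-/

open Bornology Finset RealInnerProductSpace

section

variable {E : Type*} [NormedAddCommGroup E] [InnerProductSpace ℝ E] {ι : Type*} [Fintype ι]

theorem bddAbove_sum_mul_inner_sub_image {s : Set E} (hs : IsBounded s) (w : ι → ℝ)
    (a c : ι → E) : BddAbove ((fun z => ∑ i, w i * ⟪a i, c i - z⟫) '' s) := by
  obtain ⟨R, hR⟩ := hs.subset_closedBall 0
  refine ⟨∑ i, |w i| * (‖a i‖ * (‖c i‖ + R)), ?_⟩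
  rintro _ ⟨z, hz, rfl⟩
  have hzR : ‖z‖ ≤ R := mem_closedBall_zero_iff.1 (hR hz)
  refine sum_le_sum fun i _ => ?_
  calc w i * ⟪a i, c i - z⟫ ≤ |w i| * |⟪a i, c i - z⟫| := by
        rw [← abs_mul]; exact le_abs_self _
    _ ≤ |w i| * (‖a i‖ * ‖c i - z‖) := by gcongr; exact abs_real_inner_le_norm _ _
    _ ≤ |w i| * (‖a i‖ * (‖c i‖ + R)) := by
        gcongr; exact (norm_sub_le _ _).trans (by gcongr)
end

section

variable {Ex Ey ι : Type*} [Fintype ι]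
  {X : Set Ex} {F : Ex → Ey → ℝ} {x : ι → Ex} {w : ι → ℝ}

theorem sSup_image_le_sum_mul_add_of_convexOn [AddCommGroup Ey] [Module ℝ Ey] {Y : Set Ey}
    (hF : ∀ u ∈ X, ConvexOn ℝ Y (F u ·)) {δ : ℝ} {y : ι → Ey} (hy : ∀ i, y i ∈ Y)
    (hxy : ∀ i, ∀ u ∈ X, F u (y i) - δ ≤ F (x i) (y i)) (hw₀ : ∀ i, 0 ≤ w i)
    (hw₁ : ∑ i, w i = 1) (hX : X.Nonempty) :
    sSup ((F · (∑ i, w i • y i)) '' X) ≤ ∑ i, w i * F (x i) (y i) + δ := by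
  refine csSup_le (hX.image _) (Set.forall_mem_image.2 fun u hu => ?_)
  calc F u (∑ i, w i • y i) ≤ ∑ i, w i * F u (y i) :=
        (hF u hu).map_sum_le (fun i _ => hw₀ i) hw₁ (fun i _ => hy i)
    _ ≤ ∑ i, w i * (F (x i) (y i) + δ) :=
        sum_le_sum fun i _ => mul_le_mul_of_nonneg_left (by linarith [hxy i u hu]) (hw₀ i)
    _ = ∑ i, w i * F (x i) (y i) + δ := by
        simp only [mul_add, sum_add_distrib, ← sum_mul, hw₁, one_mul]

theorem sum_mul_sub_sSup_le_sInf_image_of_concaveOn [AddCommGroup Ex] [Module ℝ Ex]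
    [NormedAddCommGroup Ey] [InnerProductSpace ℝ Ey] {Y : Set Ey}
    (hF : ∀ z ∈ Y, ConcaveOn ℝ X (F · z))
    {y g : ι → Ey} (hg : ∀ i, ∀ z ∈ Y, F (x i) (y i) + ⟪g i, z - y i⟫ ≤ F (x i) z)
    (hx : ∀ i, x i ∈ X) (hw₀ : ∀ i, 0 ≤ w i) (hw₁ : ∑ i, w i = 1) (hY : Y.Nonempty)
    (hbdd : BddAbove ((fun z => ∑ i, w i * ⟪g i, y i - z⟫) '' Y)) :
    ∑ i, w i * F (x i) (y i) - sSup ((fun z => ∑ i, w i * ⟪g i, y i - z⟫) '' Y) ≤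
      sInf ((F (∑ i, w i • x i) ·) '' Y) := by
  refine le_csInf (hY.image _) (Set.forall_mem_image.2 fun z hz => ?_)
  have hsup := le_csSup hbdd (Set.mem_image_of_mem _ hz)
  calc ∑ i, w i * F (x i) (y i) - sSup ((fun z => ∑ i, w i * ⟪g i, y i - z⟫) '' Y)
      ≤ ∑ i, w i * F (x i) (y i) - ∑ i, w i * ⟪g i, y i - z⟫ := sub_le_sub_left hsup _
    _ = ∑ i, w i * (F (x i) (y i) + ⟪g i, z - y i⟫) := by
        rw [← sum_sub_distrib]
        refine sum_congr rfl fun i _ => ?_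
        rw [← neg_sub z, inner_neg_right]
        ring
    _ ≤ ∑ i, w i * F (x i) z :=
        sum_le_sum fun i _ => mul_le_mul_of_nonneg_left (hg i z hz) (hw₀ i)
    _ ≤ F (∑ i, w i • x i) z := (hF z hz).le_map_sum (fun i _ => hw₀ i) hw₁ (fun i _ => hx i)

end

theorem stmt3_general
    {Ex Ey : Type*} [NormedAddCommGroup Ex] [InnerProductSpace ℝ Ex]
    [NormedAddCommGroup Ey] [InnerProductSpace ℝ Ey]
    (X : Set Ex) (hXcv : Convex ℝ X)
    (Y : Set Ey)
    (hYbd : Bornology.IsBounded Y) (hYcv : Convex ℝ Y)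
    (F : Ex → Ey → ℝ)
    (hFconc : ∀ y ∈ Y, ConcaveOn ℝ X (fun x => F x y))
    (hFconv : ∀ x ∈ X, ConvexOn ℝ Y (fun y => F x y))
    (Fy' : Ex → Ey → Ey)
    (hFy' : ∀ x ∈ X, ∀ y ∈ Y, ∀ z ∈ Y, F x y + ⟪Fy' x y, z - y⟫ ≤ F x z)
    (δ : ℝ)
    (xdel : Ey → Ex)
    (hxdel : ∀ y ∈ Y, xdel y ∈ X ∧ ∀ u ∈ X, F u y - δ ≤ F (xdel y) y)
    (f : Ey → ℝ) (hf : ∀ y, f y = sSup ((fun x => F x y) '' X))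
    (fstar : Ex → ℝ) (hfstar : ∀ x, fstar x = sInf ((fun y => F x y) '' Y))
    (t : ℕ) (y : Fin t → Ey) (hy : ∀ τ, y τ ∈ Y)
    (lam : Fin t → ℝ) (hlam : ∀ τ, 0 ≤ lam τ) (hsum : ∑ τ, lam τ = 1)
    (xhat : Ex) (hxhat : xhat = ∑ τ, lam τ • xdel (y τ))
    (yhat : Ey) (hyhat : yhat = ∑ τ, lam τ • y τ) :
    xhat ∈ X ∧ yhat ∈ Y ∧
      f yhat - fstar xhat ≤
        sSup ((fun z => ∑ τ, lam τ * ⟪Fy' (xdel (y τ)) (y τ), y τ - z⟫) '' Y) + δ := by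
  have hxX : ∀ τ, xdel (y τ) ∈ X := fun τ => (hxdel (y τ) (hy τ)).1
  have hxhatX : xhat ∈ X := hxhat ▸ hXcv.sum_mem (fun τ _ => hlam τ) hsum fun τ _ => hxX τ
  have hyhatY : yhat ∈ Y := hyhat ▸ hYcv.sum_mem (fun τ _ => hlam τ) hsum fun τ _ => hy τ
  refine ⟨hxhatX, hyhatY, ?_⟩
  have hf_le := sSup_image_le_sum_mul_add_of_convexOn hFconv hy
    (fun τ => (hxdel (y τ) (hy τ)).2) hlam hsum ⟨xhat, hxhatX⟩
  have hfstar_ge := sum_mul_sub_sSup_le_sInf_image_of_concaveOn hFconc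
    (fun τ => hFy' _ (hxX τ) _ (hy τ)) hxX hlam hsum ⟨yhat, hyhatY⟩
    (bddAbove_sum_mul_inner_sub_image hYbd lam _ y)
  rw [hf, hfstar, hxhat, hyhat]
  linarith

/-- Remark 1, "Moreover" part: same as the exact-maximizer statement, but with
`δ`-approximate maximizers `x_δ(y)` (i.e. `F(x_δ(y), y) ≥ max_{x∈X} F(x,y) − δ`) and
approximate subgradients; the duality gap bound picks up an extra `δ`:
`f(ŷ) − f_*(x̂) ≤ resolution + δ`. -/
theorem stmt3
    {Ex Ey : Type*} [NormedAddCommGroup Ex] [InnerProductSpace ℝ Ex] [FiniteDimensional ℝ Ex]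
    [NormedAddCommGroup Ey] [InnerProductSpace ℝ Ey] [FiniteDimensional ℝ Ey]
    (X : Set Ex) (hXne : X.Nonempty) (hXcl : IsClosed X)
    (hXbd : Bornology.IsBounded X) (hXcv : Convex ℝ X)
    (Y : Set Ey) (hYne : Y.Nonempty) (hYcl : IsClosed Y)
    (hYbd : Bornology.IsBounded Y) (hYcv : Convex ℝ Y)
    (F : Ex → Ey → ℝ)
    (K : NNReal) (hFlip : LipschitzOnWith K (fun p : Ex × Ey => F p.1 p.2) (X ×ˢ Y))
    (hFconc : ∀ y ∈ Y, ConcaveOn ℝ X (fun x => F x y))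
    (hFconv : ∀ x ∈ X, ConvexOn ℝ Y (fun y => F x y))
    (Fy' : Ex → Ey → Ey)
    (hFy' : ∀ x ∈ X, ∀ y ∈ Y, ∀ z ∈ Y, F x y + ⟪Fy' x y, z - y⟫ ≤ F x z)
    (δ : ℝ) (hδ : 0 ≤ δ)
    (xdel : Ey → Ex)
    (hxdel : ∀ y ∈ Y, xdel y ∈ X ∧ ∀ u ∈ X, F u y - δ ≤ F (xdel y) y)
    (f : Ey → ℝ) (hf : ∀ y, f y = sSup ((fun x => F x y) '' X))
    (fstar : Ex → ℝ) (hfstar : ∀ x, fstar x = sInf ((fun y => F x y) '' Y))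
    (t : ℕ) (y : Fin t → Ey) (hy : ∀ τ, y τ ∈ Y)
    (lam : Fin t → ℝ) (hlam : ∀ τ, 0 ≤ lam τ) (hsum : ∑ τ, lam τ = 1)
    (xhat : Ex) (hxhat : xhat = ∑ τ, lam τ • xdel (y τ))
    (yhat : Ey) (hyhat : yhat = ∑ τ, lam τ • y τ) :
    xhat ∈ X ∧ yhat ∈ Y ∧
      f yhat - fstar xhat ≤
        sSup ((fun z => ∑ τ, lam τ * ⟪Fy' (xdel (y τ)) (y τ), y τ - z⟫) '' Y) + δ :=
  stmt3_general X hXcv Y hYbd hYcv F hFconc hFconv Fy' hFy' δ xdel hxdel f hf fstar hfstar t y hy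
    lam hlam hsum xhat hxhat yhat hyhat
end

section
/- Consider a proximal setup (‖·‖, ω) on Y. Let e_1, ..., e_m be affine functions on E, U = {y ∈ Y : e_i(y) ≤ 0, i = 1, ..., m} intersect the relative interior of Y, let y ∈ Y° and ξ ∈ E, set p = ξ − ω'(y), and let y_* be the unique minimizer of ⟨p, z⟩ + ω(z) over z ∈ U, with Lagrange multipliers λ_1, ..., λ_m ≥ 0 satisfying λ_i e_i(y_*) = 0 and ⟨p + ω'(y_*) + Σ_i λ_i e_i', u − y_*⟩ ≥ 0 for all u ∈ Y. Then for all u ∈ Y: ⟨ξ, y_* − u⟩ − Σ_{i=1}^m λ_i e_i(u) ≤ V_y(u) − V_{y_*}(u) − V_y(y_*). -/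
/-! By the three-point identity the right-hand side equals `⟪ω' y_* - ω' y, u - y_*⟫`, and by
complementary slackness `∑ λᵢ eᵢ(u) = ⟪∑ λᵢ eᵢ', u - y_*⟫`; with `p = ξ - ω' y` the claim is then
exactly the variational inequality at `u`. -/

open RealInnerProductSpace

section BregmanDistance

variable {E : Type*} [NormedAddCommGroup E] [InnerProductSpace ℝ E]

def bregmanDist (ω : E → ℝ) (ω' : E → E) (y z : E) : ℝ :=
  ω z - ω y - ⟪ω' y, z - y⟫

theorem bregmanDist_three_point (ω : E → ℝ) (ω' : E → E) (y x u : E) :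
    bregmanDist ω ω' y u - bregmanDist ω ω' x u - bregmanDist ω ω' y x =
      ⟪ω' x - ω' y, u - x⟫ := by
  have hsplit : ⟪ω' y, u - y⟫ = ⟪ω' y, u - x⟫ + ⟪ω' y, x - y⟫ := by
    rw [← inner_add_right, sub_add_sub_cancel]
  simp only [bregmanDist, inner_sub_left, hsplit]
  ring

end BregmanDistance

theorem sum_mul_affine_eq_inner_of_complementary_slackness
    {E ι : Type*} [NormedAddCommGroup E] [InnerProductSpace ℝ E] (s : Finset ι)
    (a : ι → E) (b lam : ι → ℝ) (x u : E)
    (hslack : ∀ i ∈ s, lam i * (⟪a i, x⟫ + b i) = 0) :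
    ∑ i ∈ s, lam i * (⟪a i, u⟫ + b i) = ⟪∑ i ∈ s, lam i • a i, u - x⟫ := by
  rw [sum_inner]
  refine Finset.sum_congr rfl fun i hi => ?_
  rw [real_inner_smul_left, inner_sub_right]
  linear_combination hslack i hi

theorem stmt9_general
    {E : Type*} [NormedAddCommGroup E] [InnerProductSpace ℝ E]
    (Y : Set E)
    (ω : E → ℝ)
    (ω' : E → E)
    (m : ℕ) (ev : Fin m → E) (ec : Fin m → ℝ)
    (y : E) (ξ : E) (p : E) (hp : p = ξ - ω' y)
    (ystar : E)
    (lam : Fin m → ℝ)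
    (hslack : ∀ i, lam i * (⟪ev i, ystar⟫ + ec i) = 0)
    (hvi : ∀ u ∈ Y, 0 ≤ ⟪p + ω' ystar + ∑ i, lam i • ev i, u - ystar⟫) :
    ∀ u ∈ Y,
      ⟪ξ, ystar - u⟫ - ∑ i, lam i * (⟪ev i, u⟫ + ec i) ≤
        (ω u - ω y - ⟪ω' y, u - y⟫) - (ω u - ω ystar - ⟪ω' ystar, u - ystar⟫) -
          (ω ystar - ω y - ⟪ω' y, ystar - y⟫) := by
  intro u hu
  have hthree := bregmanDist_three_point ω ω' y ystar u
  have hmult := sum_mul_affine_eq_inner_of_complementary_slackness Finset.univ ev ec lam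
    ystar u fun i _ => hslack i
  have hvi_u := hvi u hu
  rw [hp, inner_add_left, inner_add_left, inner_sub_left] at hvi_u
  have hξ : ⟪ξ, ystar - u⟫ = -⟪ξ, u - ystar⟫ := by rw [← inner_neg_right, neg_sub]
  simp only [bregmanDist] at hthree
  rw [hξ, hthree, hmult, inner_sub_left]
  linarith

/-- Lemma A (iii): in the situation of part (ii), with `p = ξ − ω'(y)` for some `y ∈ Y°`,
the minimizer `y_*` and the Lagrange multipliers `λ_i` satisfy, for every `u ∈ Y`,
`⟨ξ, y_* − u⟩ − Σ_i λ_i e_i(u) ≤ V_y(u) − V_{y_*}(u) − V_y(y_*)`. -/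
theorem stmt9
    {E : Type*} [NormedAddCommGroup E] [InnerProductSpace ℝ E] [FiniteDimensional ℝ E]
    (Y : Set E) (hYne : Y.Nonempty) (hYcl : IsClosed Y)
    (hYbd : Bornology.IsBounded Y) (hYcv : Convex ℝ Y)
    (nrm : E → ℝ)
    (hnrm_add : ∀ u v, nrm (u + v) ≤ nrm u + nrm v)
    (hnrm_smul : ∀ (c : ℝ) (u : E), nrm (c • u) = |c| * nrm u)
    (hnrm_zero : ∀ u, nrm u = 0 ↔ u = 0)
    (ω : E → ℝ) (hωcont : ContinuousOn ω Y) (hωconv : ConvexOn ℝ Y ω)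
    (Yo : Set E) (hYo : Yo = {y ∈ Y | ∃ s : E, ∀ z ∈ Y, ω y + ⟪s, z - y⟫ ≤ ω z})
    (ω' : E → E)
    (hω'sub : ∀ y ∈ Yo, ∀ z ∈ Y, ω y + ⟪ω' y, z - y⟫ ≤ ω z)
    (hω'cont : ContinuousOn ω' Yo)
    (hstrong : ∀ y ∈ Yo, ∀ y' ∈ Yo, nrm (y - y') ^ 2 ≤ ⟪ω' y - ω' y', y - y'⟫)
    (m : ℕ) (ev : Fin m → E) (ec : Fin m → ℝ)
    (U : Set E) (hU : U = {z ∈ Y | ∀ i : Fin m, ⟪ev i, z⟫ + ec i ≤ 0})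
    (hUri : (U ∩ intrinsicInterior ℝ Y).Nonempty)
    (y : E) (hy : y ∈ Yo) (ξ : E) (p : E) (hp : p = ξ - ω' y)
    (ystar : E) (hystarU : ystar ∈ U)
    (hystarmin : IsMinOn (fun z => ⟪p, z⟫ + ω z) U ystar)
    (lam : Fin m → ℝ)
    (hlam : ∀ i, 0 ≤ lam i)
    (hslack : ∀ i, lam i * (⟪ev i, ystar⟫ + ec i) = 0)
    (hvi : ∀ u ∈ Y, 0 ≤ ⟪p + ω' ystar + ∑ i, lam i • ev i, u - ystar⟫) :
    ∀ u ∈ Y,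
      ⟪ξ, ystar - u⟫ - ∑ i, lam i * (⟪ev i, u⟫ + ec i) ≤
        (ω u - ω y - ⟪ω' y, u - y⟫) - (ω u - ω ystar - ⟪ω' ystar, u - ystar⟫) -
          (ω ystar - ω y - ⟪ω' y, ystar - y⟫) :=
  stmt9_general Y ω ω' m ev ec y ξ p hp ystar lam hslack hvi
end

section
/- Consider a proximal setup (‖·‖, ω) on Y. Let I be a finite index set, and for τ ∈ I let g_τ ∈ E with ‖g_τ‖_* ≤ L and y_τ ∈ Y, and define the affine functions h_τ(z) = ⟨g_τ, y_τ − z⟩. Let ℓ > 0 and U = {y ∈ Y : h_τ(y) ≥ ℓ for all τ ∈ I}, and assume U intersects the relative interior of Y. Let ŷ ∈ Y° be such that h_τ(ŷ) ≤ 0 for at least one τ ∈ I, and let y_+ = argmin_{y∈U}[ω(y) − ⟨ω'(ŷ), y⟩]. Then ‖ŷ − y_+‖ ≥ ℓ/L and, for every u ∈ U, V_{y_+}(u) ≤ V_ŷ(u) − ℓ²/(2L²). -/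
/-!
Since `h_τ(ŷ) ≤ 0 < ℓ ≤ h_τ(y₊)`, we get `ℓ ≤ ⟨g_τ, ŷ - y₊⟩ ≤ L ‖ŷ - y₊‖`. For the second claim the
three-point identity `V_{y₊}(u) = V_ŷ(u) - V_ŷ(y₊) - ⟨ω'(y₊) - ω'(ŷ), u - y₊⟩` reduces everything to
the optimality condition `⟨ω'(y₊) - ω'(ŷ), u - y₊⟩ ≥ 0` and to strong convexity
`V_ŷ(y₊) ≥ ‖y₊ - ŷ‖² / 2`.

As `ω'` is only available on `Y°`, both are obtained by approaching through the relative interior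
of `Y`, where subgradients exist by Hahn–Banach. The minimizer `y₊` lies in `Y°` because the
subgradients along a segment from `y₊` into `U ∩ ri Y`, once projected onto the direction of
`aff Y`, stay bounded, and a limit point is a subgradient at `y₊`. Strong convexity holds along
segments inside `Y°` by summing the monotonicity inequality over a fine partition, and passes to
`ŷ, y₊` by moving both points towards a point of `ri Y`.
-/

open RealInnerProductSpace

open Set Metric Filter Topology

section Norm
variable {E : Type*} [NormedAddCommGroup E]

theorem Seminorm.exists_pos_mul_norm_le [NormedSpace ℝ E] [FiniteDimensional ℝ E]
    (p : Seminorm ℝ E) (hp : ∀ u, p u = 0 → u = 0) :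
    ∃ m > 0, ∀ u, m * ‖u‖ ≤ p u := by
  rcases subsingleton_or_nontrivial E with hE | hE
  · exact ⟨1, one_pos, fun u => by simp [Subsingleton.elim u 0]⟩
  obtain ⟨u₀, hu₀, hmin⟩ := (isCompact_sphere (0 : E) 1).exists_isMinOn
    (NormedSpace.sphere_nonempty.2 zero_le_one)
    p.convexOn.locallyLipschitz.continuous.continuousOn
  have hu₀0 : u₀ ≠ 0 := ne_zero_of_mem_unit_sphere ⟨u₀, hu₀⟩
  refine ⟨p u₀, (apply_nonneg p u₀).lt_of_ne fun h => hu₀0 (hp u₀ h.symm), fun u => ?_⟩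
  rcases eq_or_ne u 0 with rfl | hu
  · simp
  have hnu : 0 < ‖u‖ := norm_pos_iff.2 hu
  have hmem : ‖u‖⁻¹ • u ∈ sphere (0 : E) 1 := by
    simp [norm_smul, hnu.ne']
  have := hmin hmem
  rw [mem_ofPred_eq, map_smul_eq_mul, norm_inv, norm_norm] at this
  rwa [le_inv_mul_iff₀ hnu, mul_comm] at this

theorem Seminorm.inner_le_sSup_mul [InnerProductSpace ℝ E] [FiniteDimensional ℝ E]
    (p : Seminorm ℝ E) (hp : ∀ u, p u = 0 → u = 0) (ξ w : E) :
    ⟪ξ, w⟫ ≤ sSup {r : ℝ | ∃ u : E, p u ≤ 1 ∧ r = ⟪ξ, u⟫} * p w := by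
  obtain ⟨m, hm, hlow⟩ := p.exists_pos_mul_norm_le hp
  have hbdd : BddAbove {r : ℝ | ∃ u : E, p u ≤ 1 ∧ r = ⟪ξ, u⟫} := by
    refine ⟨‖ξ‖ * m⁻¹, ?_⟩
    rintro _ ⟨u, hu, rfl⟩
    calc ⟪ξ, u⟫ ≤ ‖ξ‖ * ‖u‖ := real_inner_le_norm ξ u
      _ ≤ ‖ξ‖ * m⁻¹ := by
        gcongr
        rw [← one_div, le_div_iff₀ hm]
        linarith [hlow u]
  rcases eq_or_ne w 0 with rfl | hw
  · simp
  have hpw : 0 < p w := (apply_nonneg p w).lt_of_ne fun h => hw (hp w h.symm)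
  have hmem : ⟪ξ, (p w)⁻¹ • w⟫ ∈ {r : ℝ | ∃ u : E, p u ≤ 1 ∧ r = ⟪ξ, u⟫} :=
    ⟨(p w)⁻¹ • w, by rw [map_smul_eq_mul, norm_inv, Real.norm_of_nonneg hpw.le,
      inv_mul_cancel₀ hpw.ne'], rfl⟩
  have := le_csSup hbdd hmem
  rw [real_inner_smul_right, inv_mul_le_iff₀ hpw] at this
  linarith

theorem Seminorm.div_le_of_le_inner [InnerProductSpace ℝ E] [FiniteDimensional ℝ E]
    (p : Seminorm ℝ E) (hp : ∀ u, p u = 0 → u = 0) {g v : E} {ℓ L : ℝ} (hℓ : 0 < ℓ)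
    (hL : sSup {r : ℝ | ∃ u : E, p u ≤ 1 ∧ r = ⟪g, u⟫} ≤ L) (h : ℓ ≤ ⟪g, v⟫) :
    0 < L ∧ ℓ / L ≤ p v := by
  have hdual := p.inner_le_sSup_mul hp g v
  have hLv : ℓ ≤ L * p v := by nlinarith [apply_nonneg p v]
  have hL : 0 < L := by nlinarith [apply_nonneg p v]
  exact ⟨hL, (div_le_iff₀ hL).2 (by linarith)⟩

end Norm

section IntrinsicInterior
variable {E : Type*} [NormedAddCommGroup E] [NormedSpace ℝ E] {s : Set E} {x w : E}

theorem mem_intrinsicInterior_iff_exists_ball :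
    x ∈ intrinsicInterior ℝ s ↔ x ∈ s ∧ ∃ ε > 0, ball x ε ∩ affineSpan ℝ s ⊆ s := by
  constructor
  · intro hx
    refine ⟨intrinsicInterior_subset hx, ?_⟩
    obtain ⟨y, hy, rfl⟩ := mem_intrinsicInterior.1 hx
    obtain ⟨t, ht, hts⟩ := (nhds_subtype _ y ▸ mem_interior_iff_mem_nhds.1 hy :)
    obtain ⟨ε, hε, hball⟩ := Metric.mem_nhds_iff.1 ht
    exact ⟨ε, hε, fun z ⟨hz, hzA⟩ => hts (show (⟨z, hzA⟩ : affineSpan ℝ s) ∈ _ from hball hz)⟩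
  · rintro ⟨hxs, ε, hε, hball⟩
    refine mem_intrinsicInterior.2 ⟨⟨x, subset_affineSpan ℝ s hxs⟩, ?_, rfl⟩
    refine mem_interior_iff_mem_nhds.2 (Filter.mem_of_superset (ball_mem_nhds _ hε) ?_)
    exact fun z hz => hball ⟨hz, z.2⟩

theorem Convex.add_smul_sub_mem_intrinsicInterior (hs : Convex ℝ s) (hx : x ∈ s)
    (hw : w ∈ intrinsicInterior ℝ s) {t : ℝ} (ht : t ∈ Ioc (0 : ℝ) 1) :
    x + t • (w - x) ∈ intrinsicInterior ℝ s := by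
  obtain ⟨hws, ε, hε, hball⟩ := mem_intrinsicInterior_iff_exists_ball.1 hw
  have hA : ∀ y ∈ s, y ∈ affineSpan ℝ s := fun y hy => subset_affineSpan ℝ s hy
  refine mem_intrinsicInterior_iff_exists_ball.2
    ⟨hs.add_smul_sub_mem hx hws (Ioc_subset_Icc_self ht), t * ε, mul_pos ht.1 hε, ?_⟩
  rintro z ⟨hz, hzA⟩
  -- `z = x + t • (z' - x)` for `z' := w + t⁻¹ • (z - y)`, which lies in the `ε`-ball around `w`
  set y := x + t • (w - x)
  have hyA : y ∈ affineSpan ℝ s := by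
    simpa [AffineMap.lineMap_apply, add_comm] using AffineMap.lineMap_mem t (hA x hx) (hA w hws)
  have hv : t⁻¹ • (z - y) ∈ (affineSpan ℝ s).direction :=
    Submodule.smul_mem _ _ (AffineSubspace.vsub_mem_direction hzA hyA)
  have hz' : w + t⁻¹ • (z - y) ∈ s := by
    refine hball ⟨?_, by
      simpa [add_comm] using AffineSubspace.vadd_mem_of_mem_direction hv (hA w hws)⟩
    rw [mem_ball, dist_eq_norm, add_sub_cancel_left, norm_smul,
      Real.norm_of_nonneg (inv_nonneg.2 ht.1.le), inv_mul_lt_iff₀ ht.1, ← dist_eq_norm]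
    exact hz
  convert hs.add_smul_sub_mem hx hz' (Ioc_subset_Icc_self ht) using 1
  rw [show w + t⁻¹ • (z - y) - x = (w - x) + t⁻¹ • (z - y) by abel, smul_add, smul_smul,
    mul_inv_cancel₀ ht.1.ne', one_smul]
  simp only [y]
  abel

theorem tendsto_add_smul_sub_nhdsGT (x w : E) :
    Tendsto (fun t : ℝ => x + t • (w - x)) (𝓝[>] 0) (𝓝 x) :=
  ((continuous_const.add (continuous_id.smul continuous_const)).tendsto' 0 x
    (by simp)).mono_left nhdsWithin_le_nhds

theorem Convex.tendsto_add_smul_sub_nhdsWithin_intrinsicInterior (hs : Convex ℝ s) (hx : x ∈ s)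
    (hw : w ∈ intrinsicInterior ℝ s) :
    Tendsto (fun t : ℝ => x + t • (w - x)) (𝓝[>] 0) (𝓝[intrinsicInterior ℝ s] x) :=
  tendsto_nhdsWithin_iff.2 ⟨tendsto_add_smul_sub_nhdsGT x w,
    eventually_of_mem (Ioc_mem_nhdsGT one_pos) fun _ ht =>
      hs.add_smul_sub_mem_intrinsicInterior hx hw ht⟩

end IntrinsicInterior

theorem ConvexOn.apply_add_smul_sub_le {E : Type*} [AddCommGroup E] [Module ℝ E] {Y : Set E}
    {ω : E → ℝ} (hω : ConvexOn ℝ Y ω) {x z : E} (hx : x ∈ Y) (hz : z ∈ Y) {t : ℝ}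
    (ht : t ∈ Icc (0 : ℝ) 1) :
    ω (x + t • (z - x)) ≤ ω x + t * (ω z - ω x) := by
  have := hω.2 hx hz (sub_nonneg.2 ht.2) ht.1 (sub_add_cancel 1 t)
  rw [show (1 - t) • x + t • z = x + t • (z - x) by module, smul_eq_mul, smul_eq_mul] at this
  linarith

section Subgradient
variable {E : Type*} [NormedAddCommGroup E] [InnerProductSpace ℝ E]

def IsSubgradientOn (ω : E → ℝ) (Y : Set E) (x s : E) : Prop :=
  ∀ z ∈ Y, ω x + ⟪s, z - x⟫ ≤ ω z

variable {ω : E → ℝ} {Y : Set E} {x s : E}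

theorem IsSubgradientOn.mono {Z : Set E} (h : IsSubgradientOn ω Y x s) (hZY : Z ⊆ Y) :
    IsSubgradientOn ω Z x s :=
  fun z hz => h z (hZY hz)

theorem ConvexOn.isSubgradientOn_of_inter_ball (hω : ConvexOn ℝ Y ω) (hx : x ∈ Y) {ε : ℝ}
    (hε : 0 < ε) (h : IsSubgradientOn ω (Y ∩ ball x ε) x s) : IsSubgradientOn ω Y x s := by
  intro z hz
  obtain ⟨t, ht, hball⟩ := (Filter.Eventually.and (Ioc_mem_nhdsGT one_pos)
    ((tendsto_add_smul_sub_nhdsGT x z).eventually (ball_mem_nhds x hε))).exists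
  have hloc := h _ ⟨hω.1.add_smul_sub_mem hx hz (Ioc_subset_Icc_self ht), hball⟩
  have hconv := hω.apply_add_smul_sub_le hx hz (Ioc_subset_Icc_self ht)
  rw [add_sub_cancel_left, real_inner_smul_right] at hloc
  have : t * ⟪s, z - x⟫ ≤ t * (ω z - ω x) := by linarith
  linarith [le_of_mul_le_mul_left this ht.1]

theorem ConvexOn.exists_isSubgradientOn_of_isOpen [FiniteDimensional ℝ E] {S : Set E}
    (hS : IsOpen S) (hω : ConvexOn ℝ S ω) (hx : x ∈ S) : ∃ s, IsSubgradientOn ω S x s := by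
  set O := {q : E × ℝ | q.1 ∈ S ∧ ω q.1 < q.2}
  have hO : IsOpen O := by
    have : O = (S ×ˢ univ) ∩ (fun q : E × ℝ => ω q.1 - q.2) ⁻¹' Iio 0 := by
      ext q; simp [O, sub_neg]
    rw [this]
    exact ContinuousOn.isOpen_inter_preimage
      (((hω.continuousOn hS).comp continuousOn_fst fun q hq => hq.1).sub continuousOn_snd)
      (hS.prod isOpen_univ) isOpen_Iio
  obtain ⟨f, hf⟩ := geometric_hahn_banach_open_point hω.convex_strict_epigraph hO
    (fun h => lt_irrefl _ h.2 : (x, ω x) ∉ O)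
  set g := f.comp (ContinuousLinearMap.inl ℝ E ℝ)
  set c := f (0, 1)
  have hfg : ∀ v r, f (v, r) = g v + r * c := fun v r => by
    rw [show (v, r) = (v, (0 : ℝ)) + r • ((0 : E), (1 : ℝ)) by simp, map_add, map_smul,
      smul_eq_mul]
    rfl
  have hc : c < 0 := by
    have := hf (x, ω x + 1) ⟨hx, lt_add_one _⟩
    rw [hfg, hfg] at this
    linarith
  -- `f (v, r) = g v + r c` with `c < 0`, so `-g / c` is a subgradient
  refine ⟨(InnerProductSpace.toDual ℝ E).symm ((-c)⁻¹ • g), fun y hy => ?_⟩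
  rw [InnerProductSpace.toDual_symm_apply, smul_apply, smul_eq_mul, map_sub]
  refine le_of_forall_gt_imp_ge_of_dense fun r hr => ?_
  have hsep := hf (y, r) ⟨hy, hr⟩
  rw [hfg, hfg] at hsep
  have : (-c)⁻¹ * (g y - g x) ≤ r - ω x := by
    rw [inv_mul_le_iff₀ (neg_pos.2 hc)]
    nlinarith
  linarith

theorem ConvexOn.exists_isSubgradientOn_of_mem_intrinsicInterior [FiniteDimensional ℝ E]
    (hω : ConvexOn ℝ Y ω) (hx : x ∈ intrinsicInterior ℝ Y) : ∃ s, IsSubgradientOn ω Y x s := by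
  obtain ⟨hxY, ε, hε, hball⟩ := mem_intrinsicInterior_iff_exists_ball.1 hx
  set V := (affineSpan ℝ Y).direction
  have hxA : x ∈ affineSpan ℝ Y := subset_affineSpan ℝ Y hxY
  have hmem : ∀ v : V, v ∈ ball (0 : V) ε → x + (v : E) ∈ Y := fun v hv =>
    hball ⟨by simpa using hv, by
      simpa [add_comm] using AffineSubspace.vadd_mem_of_mem_direction v.2 hxA⟩
  have hφ : ConvexOn ℝ (ball (0 : V) ε) (fun v : V => ω (x + v)) :=
    ((hω.translate_right x).comp_linearMap V.subtype).subset hmem (convex_ball 0 ε)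
  obtain ⟨ζ, hζ⟩ := hφ.exists_isSubgradientOn_of_isOpen isOpen_ball (mem_ball_self hε)
  refine ⟨ζ, hω.isSubgradientOn_of_inter_ball hxY hε fun z ⟨hz, hzx⟩ => ?_⟩
  have := hζ ⟨z - x, AffineSubspace.vsub_mem_direction (subset_affineSpan ℝ Y hz) hxA⟩
    (by simpa [dist_eq_norm] using hzx)
  simpa [Submodule.coe_inner] using this

theorem Submodule.inner_starProjection_left_of_mem (K : Submodule ℝ E)
    [K.HasOrthogonalProjection] (u : E) {v : E} (hv : v ∈ K) :
    ⟪K.starProjection u, v⟫ = ⟪u, v⟫ := by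
  rw [inner_starProjection_left_eq_right, starProjection_eq_self_iff.2 hv]

theorem IsSubgradientOn.starProjection [FiniteDimensional ℝ E] (h : IsSubgradientOn ω Y x s)
    (hx : x ∈ Y) : IsSubgradientOn ω Y x ((affineSpan ℝ Y).direction.starProjection s) :=
  fun z hz => by
    have hzx : z - x ∈ (affineSpan ℝ Y).direction :=
      AffineSubspace.vsub_mem_direction (subset_affineSpan ℝ Y hz) (subset_affineSpan ℝ Y hx)
    rw [Submodule.inner_starProjection_left_of_mem _ _ hzx]
    exact h z hz

theorem IsSubgradientOn.of_tendsto {ι : Type*} {l : Filter ι} [l.NeBot] {y σ : ι → E}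
    (hω : ContinuousOn ω Y) (hx : x ∈ Y) (hyY : ∀ᶠ i in l, y i ∈ Y) (hy : Tendsto y l (𝓝 x))
    (hσ : Tendsto σ l (𝓝 s)) (h : ∀ᶠ i in l, IsSubgradientOn ω Y (y i) (σ i)) :
    IsSubgradientOn ω Y x s := fun z hz =>
  le_of_tendsto (((hω x hx).tendsto.comp (tendsto_nhdsWithin_iff.2 ⟨hy, hyY⟩)).add
    (hσ.inner (tendsto_const_nhds.sub hy))) (h.mono fun _ hi => hi z hz)

theorem norm_le_of_forall_inner_le {V : Submodule ℝ E} {a : E} (ha : a ∈ V) {ε M : ℝ}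
    (hε : 0 < ε) (h : ∀ v ∈ V, ‖v‖ < ε → ⟪a, v⟫ ≤ M) : ‖a‖ ≤ 2 * M / ε := by
  rw [le_div_iff₀ hε]
  rcases eq_or_ne a 0 with rfl | ha0
  · simpa using h 0 V.zero_mem (by simpa using hε)
  have hna : ‖a‖ ≠ 0 := norm_ne_zero_iff.2 ha0
  have hv : ‖(ε / 2 / ‖a‖) • a‖ < ε := by
    rw [norm_smul, Real.norm_of_nonneg (by positivity), div_mul_cancel₀ _ hna]
    linarith
  have := h _ (V.smul_mem _ ha) hv
  rw [real_inner_smul_right, real_inner_self_eq_norm_sq,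
    show ε / 2 / ‖a‖ * ‖a‖ ^ 2 = ε / 2 * ‖a‖ by field_simp] at this
  linarith

theorem exists_isSubgradientOn_of_segment [FiniteDimensional ℝ E] (hYc : IsCompact Y)
    (hYcv : Convex ℝ Y) (hω : ContinuousOn ω Y) (hx : x ∈ Y) {w : E}
    (hw : w ∈ intrinsicInterior ℝ Y) (c : ℝ)
    (h : ∀ t ∈ Ioc (0 : ℝ) 1, ∃ σ, IsSubgradientOn ω Y (x + t • (w - x)) σ ∧ c ≤ ⟪σ, w - x⟫) :
    ∃ ζ, IsSubgradientOn ω Y x ζ := by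
  obtain ⟨hwY, ε, hε, hball⟩ := mem_intrinsicInterior_iff_exists_ball.1 hw
  obtain ⟨M, hM⟩ := hYc.exists_bound_of_continuousOn hω
  set V := (affineSpan ℝ Y).direction
  set t : ℕ → ℝ := fun n => 1 / (n + 1)
  have ht : ∀ n, t n ∈ Ioc (0 : ℝ) 1 := fun n =>
    ⟨Nat.one_div_pos_of_nat, div_le_one_of_le₀ (by simp) (by positivity)⟩
  choose σ hσ hσc using fun n => h (t n) (ht n)
  set y : ℕ → E := fun n => x + t n • (w - x)
  have hyY : ∀ n, y n ∈ Y := fun n => hYcv.add_smul_sub_mem hx hwY (Ioc_subset_Icc_self (ht n))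
  -- projecting onto the direction of `affineSpan ℝ Y` keeps subgradients and makes them bounded
  set a : ℕ → E := fun n => V.starProjection (σ n)
  have ha : ∀ n, IsSubgradientOn ω Y (y n) (a n) := fun n => (hσ n).starProjection (hyY n)
  have hwx : w - x ∈ V :=
    AffineSubspace.vsub_mem_direction (subset_affineSpan ℝ Y hwY) (subset_affineSpan ℝ Y hx)
  have hbound : ∀ n, ‖a n‖ ≤ 2 * (2 * M + |c|) / ε := fun n => by
    refine norm_le_of_forall_inner_le (V.starProjection_apply_mem (σ n)) hε fun v hv hvε => ?_
    have hwv : w + v ∈ Y := hball ⟨by simpa [dist_eq_norm] using hvε, by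
      simpa [add_comm] using
        AffineSubspace.vadd_mem_of_mem_direction hv (subset_affineSpan ℝ Y hwY)⟩
    have hsub := ha n (w + v) hwv
    rw [show w + v - y n = v + (1 - t n) • (w - x) by simp only [y]; module, inner_add_right,
      real_inner_smul_right, V.inner_starProjection_left_of_mem _ hwx] at hsub
    have h1 := abs_le.1 (hM _ hwv)
    have h2 := abs_le.1 (hM _ (hyY n))
    have h3 : -|c| ≤ (1 - t n) * ⟪σ n, w - x⟫ := by
      have := (ht n).1; have := (ht n).2
      nlinarith [neg_abs_le c, abs_nonneg c, hσc n]
    linarith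
  obtain ⟨ζ, -, φ, hφ, hlim⟩ := (isCompact_closedBall (0 : E) _).tendsto_subseq
    (fun n => mem_closedBall_zero_iff.2 (hbound n))
  have htφ : Tendsto (t ∘ φ) atTop (𝓝[>] 0) := tendsto_nhdsWithin_iff.2
    ⟨tendsto_one_div_add_atTop_nhds_zero_nat.comp hφ.tendsto_atTop,
      Eventually.of_forall fun n => (ht (φ n)).1⟩
  exact ⟨ζ, .of_tendsto hω hx (.of_forall fun n => hyY (φ n))
    ((tendsto_add_smul_sub_nhdsGT x w).comp htφ) hlim (.of_forall fun n => ha (φ n))⟩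

end Subgradient

theorem le_of_forall_sub_mul_sq_le {f : ℝ → ℝ} {C : ℝ}
    (h : ∀ s t, 0 ≤ s → s ≤ t → t ≤ 1 → f s - C * (t - s) ^ 2 ≤ f t) : f 0 ≤ f 1 := by
  refine le_of_forall_pos_le_add fun δ hδ => ?_
  obtain ⟨N, hN⟩ := exists_nat_gt (C / δ)
  set n : ℕ := N + 1
  have hn : (0 : ℝ) < n := by positivity
  have key : ∀ k ≤ n, f 0 - C * k / n ^ 2 ≤ f (k / n) := by
    intro k hk
    induction k with
    | zero => simp
    | succ k ih =>
      have hstep := h (k / n) ((k + 1 : ℕ) / n) (by positivity)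
        (by gcongr; simp) (div_le_one_of_le₀ (by exact_mod_cast hk) hn.le)
      have e : ((k + 1 : ℕ) / n - k / n : ℝ) ^ 2 = 1 / n ^ 2 := by field_simp; push_cast; ring
      rw [e] at hstep
      have := ih (by omega)
      push_cast at hstep ⊢
      have e2 : C * (k + 1) / n ^ 2 = C * k / n ^ 2 + C * (1 / n ^ 2) := by ring
      linarith
  have h1 := key n le_rfl
  rw [div_self hn.ne', show C * n / n ^ 2 = C / n by field_simp] at h1
  have : C / n ≤ δ := by
    rw [div_le_iff₀ hn]
    have := (div_lt_iff₀ hδ).1 hN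
    have : (N : ℝ) ≤ n := by simp [n]
    nlinarith
  linarith

section Bregman
variable {E : Type*} [NormedAddCommGroup E] [InnerProductSpace ℝ E]

def bregmanDiv (ω : E → ℝ) (ω' : E → E) (y z : E) : ℝ :=
  ω z - ω y - ⟪ω' y, z - y⟫

theorem bregmanDiv_eq_sub_sub_inner (ω : E → ℝ) (ω' : E → E) (a b u : E) :
    bregmanDiv ω ω' b u =
      bregmanDiv ω ω' a u - bregmanDiv ω ω' a b - ⟪ω' b - ω' a, u - b⟫ := by
  simp only [bregmanDiv, inner_sub_left, inner_sub_right]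
  ring

variable {ω : E → ℝ} {ω' : E → E}

theorem half_sq_le_bregmanDiv_of_segment_subset (p : Seminorm ℝ E) {S : Set E}
    (hsub : ∀ y ∈ S, IsSubgradientOn ω S y (ω' y))
    (hstrong : ∀ y ∈ S, ∀ y' ∈ S, p (y - y') ^ 2 ≤ ⟪ω' y - ω' y', y - y'⟫)
    {A B : E} (hAB : segment ℝ A B ⊆ S) : p (B - A) ^ 2 / 2 ≤ bregmanDiv ω ω' A B := by
  set d := B - A
  set x : ℝ → E := fun t => A + t • d
  have hx : ∀ t ∈ Icc (0 : ℝ) 1, x t ∈ S := fun t ht =>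
    hAB (segment_eq_image' ℝ A B ▸ mem_image_of_mem _ ht)
  have hmono : ∀ s ∈ Icc (0 : ℝ) 1, ⟪ω' A, d⟫ + s * p d ^ 2 ≤ ⟪ω' (x s), d⟫ := by
    intro s hs
    rcases hs.1.eq_or_lt with rfl | hs0
    · simp [x]
    have := hstrong (x s) (hx s hs) A (by simpa [x] using hx 0 ⟨le_rfl, zero_le_one⟩)
    rw [show x s - A = s • d by simp [x], map_smul_eq_mul, Real.norm_of_nonneg hs.1,
      real_inner_smul_right, inner_sub_left, mul_pow, pow_two s, mul_assoc] at this
    linarith [le_of_mul_le_mul_left this hs0]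
  have := le_of_forall_sub_mul_sq_le (C := p d ^ 2 / 2)
    (f := fun t => ω (x t) - t * ⟪ω' A, d⟫ - t ^ 2 * p d ^ 2 / 2) fun s t hs hst ht => by
      have hsub := hsub (x s) (hx s ⟨hs, hst.trans ht⟩) (x t) (hx t ⟨hs.trans hst, ht⟩)
      rw [show x t - x s = (t - s) • d by simp only [x]; module, real_inner_smul_right] at hsub
      nlinarith [mul_le_mul_of_nonneg_left (hmono s ⟨hs, hst.trans ht⟩) (sub_nonneg.2 hst)]
  simp only [x, zero_smul, add_zero, one_smul, d, add_sub_cancel] at this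
  simp only [bregmanDiv]
  linarith

theorem half_sq_le_bregmanDiv (p : Seminorm ℝ E) {Y Yo : Set E} (hYcv : Convex ℝ Y)
    (hω : ContinuousOn ω Y) (hYoY : Yo ⊆ Y) (hri : intrinsicInterior ℝ Y ⊆ Yo)
    (hsub : ∀ y ∈ Yo, IsSubgradientOn ω Y y (ω' y))
    (hstrong : ∀ y ∈ Yo, ∀ y' ∈ Yo, p (y - y') ^ 2 ≤ ⟪ω' y - ω' y', y - y'⟫)
    {A B w : E} (hA : A ∈ Yo) (hω' : ContinuousWithinAt ω' Yo A) (hB : B ∈ Y)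
    (hw : w ∈ intrinsicInterior ℝ Y) : p (B - A) ^ 2 / 2 ≤ bregmanDiv ω ω' A B := by
  -- moving both endpoints towards `w` puts the segment between them into `intrinsicInterior ℝ Y`
  set At : ℝ → E := fun t => A + t • (w - A)
  set Bt : ℝ → E := fun t => B + t • (w - B)
  have hseg : ∀ t ∈ Ioc (0 : ℝ) 1, segment ℝ (At t) (Bt t) ⊆ Yo := by
    intro t ht z hz
    rw [segment_eq_image'] at hz
    obtain ⟨r, hr, rfl⟩ := hz
    have hxr : A + r • (B - A) ∈ Y := hYcv.add_smul_sub_mem (hYoY hA) hB hr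
    convert hri (hYcv.add_smul_sub_mem_intrinsicInterior hxr hw ht) using 1
    simp only [At, Bt]
    module
  have hAt := hYcv.tendsto_add_smul_sub_nhdsWithin_intrinsicInterior (hYoY hA) hw
  have hBt := hYcv.tendsto_add_smul_sub_nhdsWithin_intrinsicInterior hB hw
  have hnorm : ∀ t, p (Bt t - At t) = |1 - t| * p (B - A) := fun t => by
    rw [show Bt t - At t = (1 - t) • (B - A) by simp only [At, Bt]; module, map_smul_eq_mul,
      Real.norm_eq_abs]
  refine le_of_tendsto_of_tendsto ?_ ?_ (eventually_of_mem (Ioc_mem_nhdsGT one_pos) fun t ht =>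
    half_sq_le_bregmanDiv_of_segment_subset p (fun y hy => (hsub y hy).mono hYoY) hstrong
      (hseg t ht))
  · simp only [hnorm]
    exact ((by fun_prop : Continuous fun t : ℝ => (|1 - t| * p (B - A)) ^ 2 / 2).tendsto' 0 _
      (by simp)).mono_left nhdsWithin_le_nhds
  · have hωA := (hω A (hYoY hA)).tendsto.comp
      (hAt.mono_right (nhdsWithin_mono A intrinsicInterior_subset))
    have hωB := (hω B hB).tendsto.comp
      (hBt.mono_right (nhdsWithin_mono B intrinsicInterior_subset))
    have hω'A := hω'.tendsto.comp (hAt.mono_right (nhdsWithin_mono A hri))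
    exact (hωB.sub hωA).sub (hω'A.inner
      ((tendsto_add_smul_sub_nhdsGT B w).sub (tendsto_add_smul_sub_nhdsGT A w)))

end Bregman

section Optimality
variable {E : Type*} [NormedAddCommGroup E] [InnerProductSpace ℝ E] {ω : E → ℝ} {Y U : Set E}
  {s x : E}

theorem Convex.sep_forall_le_inner {ι : Type*} (hY : Convex ℝ Y) (I : Set ι)
    (g y : ι → E) (ℓ : ℝ) : Convex ℝ {z ∈ Y | ∀ τ ∈ I, ℓ ≤ ⟪g τ, y τ - z⟫} := by
  refine fun z₁ hz₁ z₂ hz₂ a b ha hb hab => ⟨hY hz₁.1 hz₂.1 ha hb hab, fun τ hτ => ?_⟩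
  rw [show y τ - (a • z₁ + b • z₂) = a • (y τ - z₁) + b • (y τ - z₂) by
    linear_combination (norm := module) hab.symm • y τ, inner_add_right, real_inner_smul_right,
    real_inner_smul_right]
  have hℓ : ℓ = a * ℓ + b * ℓ := by rw [← add_mul, hab, one_mul]
  linarith [mul_le_mul_of_nonneg_left (hz₁.2 τ hτ) ha, mul_le_mul_of_nonneg_left (hz₂.2 τ hτ) hb]

theorem inner_le_inner_of_isMinOn_of_isSubgradientOn
    (hmin : IsMinOn (fun z => ω z - ⟪s, z⟫) U x) {q σ : E} {t : ℝ} (ht : 0 < t)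
    (hy : x + t • (q - x) ∈ U)
    (hσ : IsSubgradientOn ω Y (x + t • (q - x)) σ) (hx : x ∈ Y) : ⟪s, q - x⟫ ≤ ⟪σ, q - x⟫ := by
  have h1 : ω x - ⟪s, x⟫ ≤ ω (x + t • (q - x)) - ⟪s, x + t • (q - x)⟫ := hmin hy
  have h2 := hσ x hx
  rw [inner_add_right, real_inner_smul_right] at h1
  rw [show x - (x + t • (q - x)) = (-t) • (q - x) by module, real_inner_smul_right] at h2
  have : t * ⟪s, q - x⟫ ≤ t * ⟪σ, q - x⟫ := by linarith
  exact le_of_mul_le_mul_left this ht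

theorem exists_isSubgradientOn_of_isMinOn [FiniteDimensional ℝ E] (hYc : IsCompact Y)
    (hω : ConvexOn ℝ Y ω) (hωc : ContinuousOn ω Y) (hU : Convex ℝ U) (hUY : U ⊆ Y) {w : E}
    (hw : w ∈ U ∩ intrinsicInterior ℝ Y) (hmin : IsMinOn (fun z => ω z - ⟪s, z⟫) U x)
    (hx : x ∈ U) : ∃ ζ, IsSubgradientOn ω Y x ζ := by
  refine exists_isSubgradientOn_of_segment hYc hω.1 hωc (hUY hx) hw.2 ⟪s, w - x⟫ fun t ht => ?_
  obtain ⟨σ, hσ⟩ := hω.exists_isSubgradientOn_of_mem_intrinsicInterior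
    (hω.1.add_smul_sub_mem_intrinsicInterior (hUY hx) hw.2 ht)
  exact ⟨σ, hσ, inner_le_inner_of_isMinOn_of_isSubgradientOn hmin ht.1
    (hU.add_smul_sub_mem hx hw.1 (Ioc_subset_Icc_self ht)) hσ (hUY hx)⟩

theorem inner_le_inner_of_isMinOn {Yo : Set E} {ω' : E → E} (hYcv : Convex ℝ Y)
    (hri : intrinsicInterior ℝ Y ⊆ Yo) (hsub : ∀ y ∈ Yo, IsSubgradientOn ω Y y (ω' y))
    (hU : Convex ℝ U) (hUY : U ⊆ Y) {w : E} (hw : w ∈ U ∩ intrinsicInterior ℝ Y)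
    (hmin : IsMinOn (fun z => ω z - ⟪s, z⟫) U x) (hx : x ∈ U)
    (hω' : ContinuousWithinAt ω' Yo x) :
    ∀ u ∈ U, ⟪s, u - x⟫ ≤ ⟪ω' x, u - x⟫ := by
  have hq : U ∩ intrinsicInterior ℝ Y ⊆ {q | ⟪s - ω' x, q - x⟫ ≤ 0} := by
    rintro q ⟨hqU, hq⟩
    have hyq := hYcv.tendsto_add_smul_sub_nhdsWithin_intrinsicInterior (hUY hx) hq
    have hlim : Tendsto (fun t : ℝ => ⟪s - ω' (x + t • (q - x)), q - x⟫) (𝓝[>] 0)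
        (𝓝 ⟪s - ω' x, q - x⟫) :=
      (tendsto_const_nhds.sub (hω'.tendsto.comp (hyq.mono_right (nhdsWithin_mono x hri)))).inner
        tendsto_const_nhds
    refine le_of_tendsto hlim (eventually_of_mem (Ioc_mem_nhdsGT one_pos) fun t ht => ?_)
    have := inner_le_inner_of_isMinOn_of_isSubgradientOn hmin ht.1
      (hU.add_smul_sub_mem hx hqU (Ioc_subset_Icc_self ht))
      (hsub _ (hri (hYcv.add_smul_sub_mem_intrinsicInterior (hUY hx) hq ht))) (hUY hx)
    simp only [inner_sub_left]
    linarith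
  intro u hu
  have hmem : u ∈ closure (U ∩ intrinsicInterior ℝ Y) :=
    mem_closure_of_tendsto (tendsto_add_smul_sub_nhdsGT u w)
      (eventually_of_mem (Ioc_mem_nhdsGT one_pos) fun t ht =>
        ⟨hU.add_smul_sub_mem hu hw.1 (Ioc_subset_Icc_self ht),
          hYcv.add_smul_sub_mem_intrinsicInterior (hUY hu) hw.2 ht⟩)
  have := closure_minimal hq (isClosed_le (by fun_prop) continuous_const) hmem
  simp only [mem_ofPred_eq, inner_sub_left] at this
  linarith

end Optimality

theorem stmt12_general
    {E : Type*} [NormedAddCommGroup E] [InnerProductSpace ℝ E] [FiniteDimensional ℝ E]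
    (Y : Set E) (hYcl : IsClosed Y)
    (hYbd : Bornology.IsBounded Y) (hYcv : Convex ℝ Y)
    (nrm : E → ℝ)
    (hnrm_add : ∀ u v, nrm (u + v) ≤ nrm u + nrm v)
    (hnrm_smul : ∀ (c : ℝ) (u : E), nrm (c • u) = |c| * nrm u)
    (hnrm_zero : ∀ u, nrm u = 0 ↔ u = 0)
    (dnrm : E → ℝ)
    (hdnrm : ∀ ξ : E, dnrm ξ = sSup {r : ℝ | ∃ u : E, nrm u ≤ 1 ∧ r = ⟪ξ, u⟫})
    (ω : E → ℝ) (hωcont : ContinuousOn ω Y) (hωconv : ConvexOn ℝ Y ω)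
    (Yo : Set E) (hYo : Yo = {y ∈ Y | ∃ s : E, ∀ z ∈ Y, ω y + ⟪s, z - y⟫ ≤ ω z})
    (ω' : E → E)
    (hω'sub : ∀ y ∈ Yo, ∀ z ∈ Y, ω y + ⟪ω' y, z - y⟫ ≤ ω z)
    (hω'cont : ContinuousOn ω' Yo)
    (hstrong : ∀ y ∈ Yo, ∀ y' ∈ Yo, nrm (y - y') ^ 2 ≤ ⟪ω' y - ω' y', y - y'⟫)
    -- the data of the level set
    (I : Finset ℕ) (g : ℕ → E) (yp : ℕ → E) (L : ℝ)
    (hg : ∀ τ ∈ I, dnrm (g τ) ≤ L)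
    (ℓ : ℝ) (hℓ : 0 < ℓ)
    (U : Set E) (hU : U = {z ∈ Y | ∀ τ ∈ I, ℓ ≤ ⟪g τ, yp τ - z⟫})
    (hUri : (U ∩ intrinsicInterior ℝ Y).Nonempty)
    (yhat : E) (hyhat : yhat ∈ Yo)
    (hone : ∃ τ ∈ I, ⟪g τ, yp τ - yhat⟫ ≤ 0)
    (yplus : E) (hyplusU : yplus ∈ U)
    (hyplusmin : IsMinOn (fun z => ω z - ⟪ω' yhat, z⟫) U yplus) :
    ℓ / L ≤ nrm (yhat - yplus) ∧
      ∀ u ∈ U,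
        ω u - ω yplus - ⟪ω' yplus, u - yplus⟫ ≤
          (ω u - ω yhat - ⟪ω' yhat, u - yhat⟫) - ℓ ^ 2 / (2 * L ^ 2) := by
  set p : Seminorm ℝ E := Seminorm.of nrm hnrm_add hnrm_smul
  have hp : ⇑p = nrm := rfl
  have hYc : IsCompact Y := Metric.isCompact_of_isClosed_isBounded hYcl hYbd
  have hYoY : Yo ⊆ Y := hYo ▸ fun y hy => hy.1
  have hri : intrinsicInterior ℝ Y ⊆ Yo := fun y hy =>
    hYo ▸ ⟨intrinsicInterior_subset hy, hωconv.exists_isSubgradientOn_of_mem_intrinsicInterior hy⟩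
  have hUY : U ⊆ Y := hU ▸ fun z hz => hz.1
  have hUcv : Convex ℝ U := hU ▸ hYcv.sep_forall_le_inner (I : Set ℕ) g yp ℓ
  obtain ⟨w, hw⟩ := hUri
  obtain ⟨hL, hA⟩ : 0 < L ∧ ℓ / L ≤ nrm (yhat - yplus) := by
    obtain ⟨τ, hτ, hτhat⟩ := hone
    refine p.div_le_of_le_inner (fun u => (hnrm_zero u).1) hℓ (hdnrm (g τ) ▸ hg τ hτ) ?_
    have hlev := (hU ▸ hyplusU).2 τ hτ
    rw [← sub_sub_sub_cancel_left yplus yhat (yp τ), inner_sub_right]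
    linarith
  have hplus : yplus ∈ Yo := hYo ▸ ⟨hUY hyplusU, exists_isSubgradientOn_of_isMinOn hYc hωconv
    hωcont hUcv hUY hw hyplusmin hyplusU⟩
  have hopt := inner_le_inner_of_isMinOn hYcv hri hω'sub hUcv hUY hw hyplusmin hyplusU
    (hω'cont yplus hplus)
  have hbreg := half_sq_le_bregmanDiv p hYcv hωcont hYoY hri hω'sub hstrong hyhat
    (hω'cont yhat hyhat) (hUY hyplusU) hw.2
  have hsq := pow_le_pow_left₀ (div_pos hℓ hL).le hA 2
  rw [← hp, ← map_sub_rev p] at hsq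
  refine ⟨hA, fun u hu => ?_⟩
  have := bregmanDiv_eq_sub_sub_inner ω ω' yhat yplus u
  simp only [bregmanDiv, inner_sub_left] at this hbreg
  have : ℓ ^ 2 / (2 * L ^ 2) = (ℓ / L) ^ 2 / 2 := by ring
  linarith [hopt u hu]

/-- Key per-step Bregman-distance decrease in the MDL method: with affine functions
`h_τ(z) = ⟨g_τ, y_τ − z⟩`, `‖g_τ‖_* ≤ L`, level set `U = {y ∈ Y : h_τ(y) ≥ ℓ ∀τ ∈ I}`
intersecting the relative interior of `Y`, a point `ŷ ∈ Y°` with `h_τ(ŷ) ≤ 0` for some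
`τ ∈ I`, and `y_+ = argmin_{y∈U}[ω(y) − ⟨ω'(ŷ), y⟩]`, one has `‖ŷ − y_+‖ ≥ ℓ/L` and
`V_{y_+}(u) ≤ V_ŷ(u) − ℓ²/(2L²)` for every `u ∈ U`. -/
theorem stmt12
    {E : Type*} [NormedAddCommGroup E] [InnerProductSpace ℝ E] [FiniteDimensional ℝ E]
    (Y : Set E) (hYne : Y.Nonempty) (hYcl : IsClosed Y)
    (hYbd : Bornology.IsBounded Y) (hYcv : Convex ℝ Y)
    (nrm : E → ℝ)
    (hnrm_add : ∀ u v, nrm (u + v) ≤ nrm u + nrm v)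
    (hnrm_smul : ∀ (c : ℝ) (u : E), nrm (c • u) = |c| * nrm u)
    (hnrm_zero : ∀ u, nrm u = 0 ↔ u = 0)
    (dnrm : E → ℝ)
    (hdnrm : ∀ ξ : E, dnrm ξ = sSup {r : ℝ | ∃ u : E, nrm u ≤ 1 ∧ r = ⟪ξ, u⟫})
    (ω : E → ℝ) (hωcont : ContinuousOn ω Y) (hωconv : ConvexOn ℝ Y ω)
    (Yo : Set E) (hYo : Yo = {y ∈ Y | ∃ s : E, ∀ z ∈ Y, ω y + ⟪s, z - y⟫ ≤ ω z})
    (ω' : E → E)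
    (hω'sub : ∀ y ∈ Yo, ∀ z ∈ Y, ω y + ⟪ω' y, z - y⟫ ≤ ω z)
    (hω'cont : ContinuousOn ω' Yo)
    (hstrong : ∀ y ∈ Yo, ∀ y' ∈ Yo, nrm (y - y') ^ 2 ≤ ⟪ω' y - ω' y', y - y'⟫)
    -- the data of the level set
    (I : Finset ℕ) (g : ℕ → E) (yp : ℕ → E) (L : ℝ)
    (hg : ∀ τ ∈ I, dnrm (g τ) ≤ L) (hyp : ∀ τ ∈ I, yp τ ∈ Y)
    (ℓ : ℝ) (hℓ : 0 < ℓ)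
    (U : Set E) (hU : U = {z ∈ Y | ∀ τ ∈ I, ℓ ≤ ⟪g τ, yp τ - z⟫})
    (hUri : (U ∩ intrinsicInterior ℝ Y).Nonempty)
    (yhat : E) (hyhat : yhat ∈ Yo)
    (hone : ∃ τ ∈ I, ⟪g τ, yp τ - yhat⟫ ≤ 0)
    (yplus : E) (hyplusU : yplus ∈ U)
    (hyplusmin : IsMinOn (fun z => ω z - ⟪ω' yhat, z⟫) U yplus) :
    ℓ / L ≤ nrm (yhat - yplus) ∧
      ∀ u ∈ U,
        ω u - ω yplus - ⟪ω' yplus, u - yplus⟫ ≤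
          (ω u - ω yhat - ⟪ω' yhat, u - yhat⟫) - ℓ ^ 2 / (2 * L ^ 2) :=
  stmt12_general Y hYcl hYbd hYcv nrm hnrm_add hnrm_smul hnrm_zero dnrm hdnrm ω hωcont hωconv Yo hYo
    ω' hω'sub hω'cont hstrong I g yp L hg ℓ hℓ U hU hUri yhat hyhat hone yplus hyplusU hyplusmin
end
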